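/- arXiv:0903.3753 — 3 statements merged into one kernel-verified Lean document; each statement's English description precedes it below -/
import Mathlib

section
/- For integers k and n with 3 ≤ k ≤ n−1, β_k(n) < 0. -/
/-- All binary words of length `n` (`false` = 0, `true` = 1), listed in lexicographic order. -/
def allWords : ℕ → List (List Bool)
  | 0 => [[]]
  | n + 1 => (allWords n).flatMap (fun w => [w ++ [false], w ++ [true]])

/-- The skew of a binary word: number of 0s minus number of 1s. -/
def skew (w : List Bool) : ℤ := (w.map (fun b => if b then (-1 : ℤ) else 1)).sum

/-- The discrepancy of a binary word: the maximum over all (nonempty) initial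
segments of the absolute difference between the number of 0s and of 1s. -/
def disc (w : List Bool) : ℤ :=
  ((List.range w.length).map (fun M => |skew (w.take (M + 1))|)).foldr max 0

/-- `w` contains a run of `k` consecutive 0s. -/
def hasZeroRun (k : ℕ) (w : List Bool) : Prop := List.replicate k false <:+: w

instance (k : ℕ) : DecidablePred (hasZeroRun k) := fun _ => inferInstanceAs (Decidable (_ <:+: _))

/-- Number of binary words of length `n` containing no run of `k` consecutive 0s. -/
def alpha (k n : ℕ) : ℕ := ((allWords n).filter (fun w => !decide (hasZeroRun k w))).length

/-- Sum of the skews of all binary words of length `n` containing no run of `k` consecutive 0s. -/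
def beta (k n : ℕ) : ℤ :=
  (((allWords n).filter (fun w => !decide (hasZeroRun k w))).map skew).sum

/-- Strict lexicographic order on binary words, with 0 < 1. -/
def lexLt (u v : List Bool) : Prop := List.Lex (· < ·) u v

instance : DecidableRel lexLt := fun _ _ => inferInstanceAs (Decidable (List.Lex _ _ _))

/-- Weak lexicographic order on binary words. -/
def lexLe (u v : List Bool) : Prop := lexLt u v ∨ u = v

instance : DecidableRel lexLe := fun _ _ => inferInstanceAs (Decidable (_ ∨ _))

/-- A binary Lyndon word: nonempty and strictly lexicographically smaller than
each of its nontrivial cyclic rotations. -/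
def IsLyndon (w : List Bool) : Prop :=
  w ≠ [] ∧ ∀ i ∈ Finset.Ico 1 w.length, lexLt w (w.rotate i)

instance : DecidablePred IsLyndon := fun _ => inferInstanceAs (Decidable (_ ∧ _))

/-- `ell n k`: the concatenation, in lexicographic order, of all binary Lyndon words of
length `n` whose longest run of consecutive 0s has length exactly `k`. -/
def ell (n k : ℕ) : List Bool :=
  (List.insertionSort lexLe ((allWords n).filter (fun w =>
    decide (IsLyndon w) && decide (hasZeroRun k w) && !decide (hasZeroRun (k + 1) w)))).flatten

/-- `LWord n`: the lexicographically least binary de Bruijn sequence of order `n`, i.e. the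
concatenation, in lexicographic order, of all binary Lyndon words of length dividing `n`. -/
def LWord (n : ℕ) : List Bool :=
  (List.insertionSort lexLe (((List.range (n + 1)).flatMap allWords).filter
    (fun w => decide (IsLyndon w) && decide (w.length ∣ n)))).flatten

/-- The number of occurrences of `0^k` as a subword of `w`. -/
def occCount (k : ℕ) (w : List Bool) : ℕ :=
  ((List.range (w.length + 1)).filter
    (fun i => decide (List.replicate k false <+: w.drop i))).length

/-! Write `β = β_{k+1}` and call a word saturated if it avoids `0^(k+1)` but ends in `0^k`. Every
word of length `n` avoiding `0^(k+1)` extends by both letters, except that a saturated word cannot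
be extended by `0`; so `β(n+1) = 2β(n) - L(n)`, where `L(n)` is the total skew of the lost words
`w0`. For `n ≥ k + 1` the saturated words are exactly the words `v10^k` with `v` avoiding
`0^(k+1)`, whence `L(n) = β(n-k-1) + k·α(n-k-1)` and
`β(n+1) - β(n) = β(n) - β(n-k-1) - k·α(n-k-1)`. By induction `β` is nonincreasing, and
`β(k+1) = -(k+1)`. -/

open List

section WordSum

variable {M : Type*} [AddCommMonoid M]

def wordSum (n : ℕ) (f : List Bool → M) : M := ((allWords n).map f).sum

theorem length_of_mem_allWords {n : ℕ} {w : List Bool} (h : w ∈ allWords n) : w.length = n := by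
  induction n generalizing w with
  | zero => simp_all [allWords]
  | succ n ih =>
    obtain ⟨v, hv, hw⟩ := mem_flatMap.1 h
    rcases mem_pair.1 hw with rfl | rfl <;> simp [ih hv]

theorem wordSum_zero (f : List Bool → M) : wordSum 0 f = f [] := by
  simp [wordSum, allWords]

theorem wordSum_succ (n : ℕ) (f : List Bool → M) :
    wordSum (n + 1) f = wordSum n (fun w => f (w ++ [false]) + f (w ++ [true])) := by
  simp [wordSum, allWords, flatMap_def, sum_flatten, Function.comp_def]

theorem wordSum_congr {n : ℕ} {f g : List Bool → M} (h : ∀ w, w.length = n → f w = g w) :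
    wordSum n f = wordSum n g :=
  congrArg sum (map_congr_left fun _ hw => h _ (length_of_mem_allWords hw))

theorem wordSum_add_distrib (n : ℕ) (f g : List Bool → M) :
    wordSum n (fun w => f w + g w) = wordSum n f + wordSum n g :=
  sum_map_add

theorem wordSum_mul_left {R : Type*} [NonUnitalNonAssocSemiring R] (n : ℕ) (c : R)
    (f : List Bool → R) : wordSum n (fun w => c * f w) = c * wordSum n f :=
  sum_map_mul_left _ _ _

theorem wordSum_add (m r : ℕ) (f : List Bool → M) :
    wordSum (m + r) f = wordSum m (fun v => wordSum r (fun u => f (v ++ u))) := by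
  induction r generalizing f with
  | zero => simp [wordSum_zero]
  | succ r ih => simp only [← Nat.add_assoc, wordSum_succ, ih, append_assoc]

theorem wordSum_ite_eq (n : ℕ) (t : List Bool) (c : M) :
    wordSum n (fun w => if w = t then c else 0) = if t.length = n then c else 0 := by
  induction n generalizing t with
  | zero => simp [wordSum_zero, eq_comm]
  | succ n ih =>
    rw [wordSum_succ]
    rcases eq_nil_or_concat t with rfl | ⟨t, b, rfl⟩
    · simp [wordSum]
    · cases b <;> simp [ih]

end WordSum

theorem beta_eq_wordSum (k n : ℕ) :
    beta k n = wordSum n (fun w => if hasZeroRun k w then 0 else skew w) := by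
  simp [beta, wordSum, sum_map_ite]

theorem alpha_eq_wordSum (k n : ℕ) :
    (alpha k n : ℤ) = wordSum n (fun w => if hasZeroRun k w then 0 else 1) := by
  simp [alpha, wordSum, sum_map_ite]

@[simp] theorem skew_nil : skew [] = 0 := rfl

@[simp] theorem skew_cons (b : Bool) (w : List Bool) :
    skew (b :: w) = (if b then -1 else 1) + skew w := by
  simp [skew]

@[simp] theorem skew_append (u v : List Bool) : skew (u ++ v) = skew u + skew v := by
  simp [skew]

@[simp] theorem skew_replicate_false (k : ℕ) : skew (replicate k false) = k := by
  simp [skew]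

theorem wordSum_skew (n : ℕ) : wordSum n skew = 0 := by
  induction n with
  | zero => simp [wordSum_zero]
  | succ n ih =>
    have hpair : ∀ w, skew (w ++ [false]) + skew (w ++ [true]) = skew w + skew w := by
      intro w; simp; ring
    simp only [wordSum_succ, hpair, wordSum_add_distrib, ih, add_zero]

theorem infix_append_cons_iff_of_not_mem {α : Type*} {l xs ys : List α} {a : α} (ha : a ∉ l) :
    l <:+: xs ++ a :: ys ↔ l <:+: xs ∨ l <:+: ys := by
  refine ⟨fun h => ?_, fun h => h.elim infix_append_of_infix_left
    fun h => infix_append_of_infix_right (infix_cons h)⟩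
  rcases infix_append_iff.1 h with h | h | ⟨l₁, l₂, rfl, h₁, h₂⟩
  · exact .inl h
  · rcases infix_cons_iff.1 h with h | h
    · rcases prefix_cons_iff.1 h with rfl | ⟨t, rfl, -⟩
      · exact .inl nil_infix
      · simp at ha
    · exact .inr h
  · rcases prefix_cons_iff.1 h₂ with rfl | ⟨t, rfl, -⟩
    · exact .inl (by simpa using h₁.isInfix)
    · simp at ha

theorem hasZeroRun_append_true_cons {k : ℕ} (w u : List Bool) :
    hasZeroRun k (w ++ true :: u) ↔ hasZeroRun k w ∨ hasZeroRun k u :=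
  infix_append_cons_iff_of_not_mem (by simp)

theorem not_hasZeroRun_of_length_lt {k : ℕ} {w : List Bool} (h : w.length < k) :
    ¬ hasZeroRun k w :=
  fun hw => by simpa using (hw.length_le.trans_lt h)

theorem hasZeroRun_append_true {k : ℕ} (w : List Bool) :
    hasZeroRun (k + 1) (w ++ [true]) ↔ hasZeroRun (k + 1) w := by
  simp [hasZeroRun_append_true_cons, not_hasZeroRun_of_length_lt]

theorem hasZeroRun_append_false {k : ℕ} (w : List Bool) :
    hasZeroRun (k + 1) (w ++ [false]) ↔ hasZeroRun (k + 1) w ∨ replicate k false <:+ w := by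
  unfold hasZeroRun
  rw [replicate_succ', infix_concat_iff, suffix_append_inj_of_length_eq rfl, and_iff_left rfl,
    or_comm]

def IsSaturated (k : ℕ) (w : List Bool) : Prop :=
  ¬ hasZeroRun (k + 1) w ∧ replicate k false <:+ w

instance (k : ℕ) : DecidablePred (IsSaturated k) :=
  fun _ => inferInstanceAs (Decidable (_ ∧ _))

theorem isSaturated_append_iff {k : ℕ} {v u : List Bool} (hu : u.length = k + 1) :
    IsSaturated k (v ++ u) ↔ ¬ hasZeroRun (k + 1) v ∧ u = true :: replicate k false := by
  constructor
  · rintro ⟨hrun, hsuf⟩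
    obtain ⟨s, rfl⟩ := suffix_of_suffix_length_le hsuf (suffix_append v u) (by simp [hu])
    have hs : s.length = 1 := by rw [length_append, length_replicate] at hu; omega
    obtain ⟨b, rfl⟩ := length_eq_one_iff.1 hs
    cases b
    · exact absurd ⟨v, [], by simp [replicate_succ]⟩ hrun
    · exact ⟨fun h => hrun (h.trans infix_append_left), rfl⟩
  · rintro ⟨hv, rfl⟩
    refine ⟨?_, ⟨v ++ [true], by simp⟩⟩
    rw [hasZeroRun_append_true_cons]
    exact not_or.2 ⟨hv, not_hasZeroRun_of_length_lt (by simp)⟩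

theorem isSaturated_iff_eq_replicate {k : ℕ} {w : List Bool} (hw : w.length ≤ k) :
    IsSaturated k w ↔ w = replicate k false := by
  refine ⟨fun ⟨_, hsuf⟩ => (hsuf.eq_of_length_le (by simpa using hw)).symm, ?_⟩
  rintro rfl
  exact ⟨not_hasZeroRun_of_length_lt (by simp), suffix_refl _⟩

def lostSkew (k n : ℕ) : ℤ :=
  wordSum n fun w => if IsSaturated k w then skew (w ++ [false]) else 0

theorem beta_succ_add_lostSkew (k n : ℕ) :
    beta (k + 1) (n + 1) + lostSkew k n = 2 * beta (k + 1) n := by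
  simp only [beta_eq_wordSum, lostSkew, wordSum_succ, two_mul, ← wordSum_add_distrib]
  refine wordSum_congr fun w _ => ?_
  by_cases hrun : hasZeroRun (k + 1) w <;> by_cases hsuf : replicate k false <:+ w <;>
    simp [IsSaturated, hasZeroRun_append_false, hasZeroRun_append_true, hrun, hsuf] <;> ring

theorem lostSkew_add (k m : ℕ) :
    lostSkew k (m + (k + 1)) = beta (k + 1) m + k * alpha (k + 1) m := by
  rw [lostSkew, wordSum_add, beta_eq_wordSum, alpha_eq_wordSum, ← wordSum_mul_left,
    ← wordSum_add_distrib]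
  refine wordSum_congr fun v _ => ?_
  have hinner : ∀ u : List Bool, u.length = k + 1 →
      (if IsSaturated k (v ++ u) then skew (v ++ u ++ [false]) else 0) =
        if u = true :: replicate k false then
          (if hasZeroRun (k + 1) v then 0 else skew v + k) else 0 := by
    intro u hu
    by_cases hut : u = true :: replicate k false
    · subst hut
      simp only [isSaturated_append_iff hu, and_true, if_true]
      split_ifs <;> simp_all
    · rw [if_neg hut, if_neg fun h => hut ((isSaturated_append_iff hu).1 h).2]
  rw [wordSum_congr hinner, wordSum_ite_eq, if_pos (by simp)]
  split_ifs <;> ring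

theorem lostSkew_of_le {k n : ℕ} (h : n ≤ k) : lostSkew k n = if n = k then k + 1 else 0 := by
  have hterm : ∀ w : List Bool, w.length = n →
      (if IsSaturated k w then skew (w ++ [false]) else 0) =
        if w = replicate k false then (k + 1 : ℤ) else 0 := by
    intro w hw
    simp only [isSaturated_iff_eq_replicate (hw.trans_le h)]
    split_ifs with hw' <;> simp [hw']
  rw [lostSkew, wordSum_congr hterm, wordSum_ite_eq, length_replicate]
  simp [eq_comm]

theorem beta_of_lt {k n : ℕ} (h : n < k) : beta k n = 0 := by
  rw [beta_eq_wordSum, wordSum_congr fun w hw => if_neg (not_hasZeroRun_of_length_lt (hw ▸ h)),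
    wordSum_skew]

theorem beta_self (k : ℕ) : beta (k + 1) (k + 1) = -(k + 1) := by
  have h := beta_succ_add_lostSkew k k
  rw [beta_of_lt k.lt_succ_self, lostSkew_of_le le_rfl, if_pos rfl] at h
  push_cast at h
  linarith

theorem beta_succ_le {k n : ℕ} (hn : ∀ m ≤ n, beta (k + 1) n ≤ beta (k + 1) m) :
    beta (k + 1) (n + 1) ≤ beta (k + 1) n := by
  suffices beta (k + 1) n ≤ lostSkew k n by linarith [beta_succ_add_lostSkew k n]
  rcases le_or_gt n k with hnk | hkn
  · rw [beta_of_lt (Nat.lt_succ_of_le hnk), lostSkew_of_le hnk]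
    split_ifs <;> positivity
  · obtain ⟨m, rfl⟩ := Nat.exists_eq_add_of_le' hkn
    rw [lostSkew_add]
    have hα : (0 : ℤ) ≤ k * alpha (k + 1) m := by positivity
    linarith [hn m (by omega)]

theorem beta_antitone (k : ℕ) : Antitone (beta (k + 1)) := by
  suffices h : ∀ n, ∀ m ≤ n, beta (k + 1) n ≤ beta (k + 1) m from fun m n hmn => h n m hmn
  intro n
  induction n with
  | zero => intro m hm; rw [Nat.le_zero.1 hm]
  | succ n ih =>
    intro m hm
    rcases hm.eq_or_lt with rfl | hm
    · exact le_rfl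
    · exact (beta_succ_le ih).trans (ih m (Nat.le_of_lt_succ hm))

/-- For `3 ≤ k ≤ n − 1`, `β_k(n) < 0`. -/
theorem beta_neg (k n : ℕ) (hk : 3 ≤ k) (hkn : k + 1 ≤ n) : beta k n < 0 := by
  obtain ⟨j, rfl⟩ : ∃ j, k = j + 1 := ⟨k - 1, by omega⟩
  calc beta (j + 1) n ≤ beta (j + 1) (j + 1) := beta_antitone j (by omega)
    _ = -(j + 1) := beta_self j
    _ < 0 := by linarith
end

section
/- Let n be a prime with n ≥ 3. Then L_n = 0 · ℓ_{n−1} · ℓ_{n−2} ⋯ ℓ_2 · ℓ_1 · 1, i.e., L_n is the concatenation of the single letter 0, then the words ℓ_k for k = n−1 down to k = 1 in decreasing order of k, and finally the single letter 1. -/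
/-! For prime `n` the Lyndon words of length dividing `n` are `0`, `1` and the Lyndon words of
length `n`. A Lyndon word begins with its longest run of 0s, so a Lyndon word of length
`n ≥ 2` whose longest 0-run has length `k` has the form `0^k 1 r` with `1 ≤ k < n`. Hence `0`
comes first, then the classes in decreasing order of `k`, and `1` last; sorting is therefore
the concatenation of the sorted classes. -/

open List

theorem lexLe_iff_le {u v : List Bool} : lexLe u v ↔ u ≤ v := by
  rw [le_iff_lt_or_eq]; rfl

instance : IsTrans (List Bool) lexLe :=
  ⟨fun _ _ _ h₁ h₂ => lexLe_iff_le.2 ((lexLe_iff_le.1 h₁).trans (lexLe_iff_le.1 h₂))⟩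

instance : Std.Total lexLe :=
  ⟨fun u v => (le_total u v).imp lexLe_iff_le.2 lexLe_iff_le.2⟩

instance : Std.Antisymm lexLe :=
  ⟨fun _ _ h₁ h₂ => le_antisymm (lexLe_iff_le.1 h₁) (lexLe_iff_le.1 h₂)⟩

theorem mem_allWords {n : ℕ} {w : List Bool} : w ∈ allWords n ↔ w.length = n := by
  induction n generalizing w with
  | zero => simp [allWords]
  | succ n ih =>
    rcases eq_nil_or_concat w with rfl | ⟨u, b, rfl⟩
    · simp [allWords]
    · cases b <;> simp [allWords, ih]

theorem replicate_false_append_true_lt {j k : ℕ} (h : j < k) (r r' : List Bool) :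
    replicate k false ++ true :: r < replicate j false ++ true :: r' := by
  obtain ⟨m, rfl⟩ := Nat.exists_eq_add_of_lt h
  rw [add_assoc, replicate_add, append_assoc, replicate_succ, cons_append]
  exact Lex.append_left (· < ·) (Lex.rel (by decide)) _

theorem singleton_false_lt_replicate_append {k : ℕ} (hk : 1 ≤ k) (r : List Bool) :
    [false] < replicate k false ++ true :: r := by
  obtain ⟨m, rfl⟩ := Nat.exists_eq_add_of_le' hk
  cases m <;> exact Lex.cons Lex.nil

theorem replicate_append_lt_singleton_true {k : ℕ} (hk : 1 ≤ k) (r : List Bool) :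
    replicate k false ++ true :: r < [true] := by
  obtain ⟨m, rfl⟩ := Nat.exists_eq_add_of_le' hk
  exact Lex.rel rfl

theorem replicate_false_prefix_of_lt {k : ℕ} {u t : List Bool}
    (h : u < replicate k false ++ t) (hk : k ≤ u.length) : replicate k false <+: u := by
  induction k generalizing u with
  | zero => exact nil_prefix
  | succ k ih =>
    obtain _ | ⟨b, u⟩ := u
    · simp at hk
    · cases h with
      | cons h => exact (prefix_cons_inj _).2 (ih h (by simpa using hk))
      | rel h => exact absurd h (by cases b <;> decide)

theorem hasZeroRun_zero (w : List Bool) : hasZeroRun 0 w := nil_infix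

theorem hasZeroRun.mono {j k : ℕ} {w : List Bool} (h : hasZeroRun k w) (hjk : j ≤ k) :
    hasZeroRun j w := by
  refine IsInfix.trans ⟨[], replicate (k - j) false, ?_⟩ h
  rw [nil_append, ← replicate_add, Nat.add_sub_cancel' hjk]

theorem hasZeroRun.le_length {k : ℕ} {w : List Bool} (h : hasZeroRun k w) : k ≤ w.length := by
  simpa using h.length_le

def maxZeroRun (w : List Bool) : ℕ := Nat.findGreatest (hasZeroRun · w) w.length

theorem hasZeroRun_and_not_hasZeroRun_succ_iff {k : ℕ} {w : List Bool} :
    hasZeroRun k w ∧ ¬ hasZeroRun (k + 1) w ↔ maxZeroRun w = k := by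
  rw [maxZeroRun, Nat.findGreatest_eq_iff]
  constructor
  · rintro ⟨hk, hk1⟩
    exact ⟨hk.le_length, fun _ => hk, fun m hm _ h => hk1 (h.mono hm)⟩
  · rintro ⟨-, hk, hgt⟩
    refine ⟨?_, fun h => hgt k.lt_succ_self h.le_length h⟩
    rcases k with _ | k
    · exact hasZeroRun_zero w
    · exact hk k.succ_ne_zero

theorem not_isLyndon_replicate {m : ℕ} (hm : 2 ≤ m) (b : Bool) :
    ¬ IsLyndon (replicate m b) := by
  rintro ⟨-, h⟩
  have := h 1 (Finset.mem_Ico.2 ⟨le_rfl, by rwa [length_replicate]⟩)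
  rw [rotate_replicate] at this
  exact lt_irrefl (α := List Bool) _ this

-- The rotation of `w` starting at the run is larger than `w` and begins with `0^k`.
theorem IsLyndon.replicate_false_prefix {w : List Bool} {k : ℕ} (hl : IsLyndon w)
    (hk : hasZeroRun k w) : replicate k false <+: w := by
  obtain ⟨s, t, rfl⟩ := hk
  rcases Nat.eq_zero_or_pos k with rfl | hk
  · exact nil_prefix
  rcases s with _ | ⟨a, s⟩
  · exact prefix_append _ _
  have hrot := hl.2 (a :: s).length <| Finset.mem_Ico.2
    ⟨by simp, by simp only [length_append, length_replicate]; omega⟩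
  rw [append_assoc, rotate_append_length_eq, append_assoc] at hrot
  rw [append_assoc]
  exact replicate_false_prefix_of_lt hrot (by simp only [length_append, length_replicate]; omega)

theorem IsLyndon.one_le_maxZeroRun {w : List Bool} (hl : IsLyndon w) (hw : 2 ≤ w.length) :
    1 ≤ maxZeroRun w := by
  have hfalse : false ∈ w := by
    by_contra h
    have hw' : w = replicate w.length true :=
      eq_replicate_iff.2 ⟨rfl, fun b hb => by cases b <;> simp_all⟩
    rw [hw'] at hl
    exact not_isLyndon_replicate (by simpa using hw) true hl
  exact Nat.le_findGreatest (by omega) ((singleton_infix_iff _ _).2 hfalse)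

theorem IsLyndon.maxZeroRun_lt_length {w : List Bool} (hl : IsLyndon w) (hw : 2 ≤ w.length) :
    maxZeroRun w < w.length := by
  refine (Nat.findGreatest_le _).lt_of_ne fun h => ?_
  have hrun := (hasZeroRun_and_not_hasZeroRun_succ_iff.2 (rfl : maxZeroRun w = _)).1
  rw [maxZeroRun, h] at hrun
  rw [← hrun.sublist.eq_of_length (by simp)] at hl
  exact not_isLyndon_replicate (by simpa using hw) false hl

theorem IsLyndon.eq_replicate_maxZeroRun_append {w : List Bool} (hl : IsLyndon w)
    (hw : 2 ≤ w.length) : ∃ r, w = replicate (maxZeroRun w) false ++ true :: r := by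
  obtain ⟨hrun, hnrun⟩ := hasZeroRun_and_not_hasZeroRun_succ_iff.2 (rfl : maxZeroRun w = _)
  obtain ⟨_ | ⟨b, r⟩, hr⟩ := hl.replicate_false_prefix hrun
  · have hlen := congrArg length hr
    have := hl.maxZeroRun_lt_length hw
    rw [append_nil, length_replicate] at hlen
    omega
  · cases b
    · refine absurd ?_ hnrun
      rw [hasZeroRun, replicate_succ']
      exact ⟨[], r, by simpa using hr⟩
    · exact ⟨r, hr.symm⟩

def lyndonClass (n k : ℕ) : List (List Bool) :=
  (allWords n).filter (fun w =>
    decide (IsLyndon w) && decide (hasZeroRun k w) && !decide (hasZeroRun (k + 1) w))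

theorem mem_lyndonClass {n k : ℕ} {w : List Bool} :
    w ∈ lyndonClass n k ↔ w.length = n ∧ IsLyndon w ∧ maxZeroRun w = k := by
  simp [lyndonClass, mem_allWords, ← hasZeroRun_and_not_hasZeroRun_succ_iff, and_assoc]

theorem exists_eq_replicate_append_of_mem_lyndonClass {n k : ℕ} (hn : 2 ≤ n) {w : List Bool}
    (hw : w ∈ lyndonClass n k) : 1 ≤ k ∧ ∃ r, w = replicate k false ++ true :: r := by
  obtain ⟨rfl, hl, rfl⟩ := mem_lyndonClass.1 hw
  exact ⟨hl.one_le_maxZeroRun hn, hl.eq_replicate_maxZeroRun_append hn⟩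

theorem count_flatten_map_filter {α β : Type*} [DecidableEq α] (a : α) (l : List α)
    (ks : List β) (q : β → α → Bool) :
    ((ks.map fun k => l.filter (q k)).flatten).count a = ks.countP (q · a) * l.count a := by
  induction ks with
  | nil => simp
  | cons k ks ih =>
    rw [map_cons, flatten_cons, count_append, ih, countP_cons, add_mul]
    by_cases hq : q k a
    · simp [count_filter hq, hq, add_comm]
    · simp [count_eq_zero.2 fun h => hq (mem_filter.1 h).2, hq]

theorem perm_flatten_map_filter {α β : Type*} [DecidableEq α] {l : List α} {p : α → Bool}
    {ks : List β} {q : β → α → Bool}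
    (h : ∀ a ∈ l, ks.countP (q · a) = if p a then 1 else 0) :
    (l.filter p).Perm (ks.map fun k => l.filter (q k)).flatten := by
  refine perm_iff_count.2 fun a => ?_
  rw [count_flatten_map_filter]
  by_cases ha : a ∈ l
  · by_cases hp : p a
    · simp [h a ha, hp, count_filter hp]
    · simp [h a ha, hp, count_eq_zero.2 fun h => hp (mem_filter.1 h).2]
  · simp [count_eq_zero.2 ha, count_eq_zero.2 fun h => ha (mem_filter.1 h).1]

theorem perm_filter_isLyndon_flatten_lyndonClass {n : ℕ} (hn : 2 ≤ n) :
    ((allWords n).filter (fun w => decide (IsLyndon w))).Perm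
      ((Ico 1 n).reverse.map (lyndonClass n)).flatten := by
  refine perm_flatten_map_filter fun w hw => ?_
  rw [mem_allWords] at hw
  subst hw
  by_cases hl : IsLyndon w
  · rw [countP_congr (q := (· == maxZeroRun w)) fun k _ => ?_, ← count_eq_countP, count_reverse,
      count_eq_one_of_mem (Ico.nodup _ _)
        (Ico.mem.2 ⟨hl.one_le_maxZeroRun hn, hl.maxZeroRun_lt_length hn⟩)]
    · simp [hl]
    · simpa [hl] using hasZeroRun_and_not_hasZeroRun_succ_iff.trans eq_comm
  · simp [hl]

theorem filter_isLyndon_length_dvd_prime {n : ℕ} (hn : n.Prime) :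
    ((range (n + 1)).flatMap allWords).filter
        (fun w => decide (IsLyndon w) && decide (w.length ∣ n)) =
      [[false], [true]] ++ (allWords n).filter (fun w => decide (IsLyndon w)) := by
  obtain ⟨m, rfl⟩ : ∃ m, n = m + 2 := ⟨n - 2, by have := hn.two_le; omega⟩
  have hmid : (range' 2 m).flatMap (fun d => (allWords d).filter
      (fun w => decide (IsLyndon w) && decide (w.length ∣ m + 2))) = [] := by
    refine flatMap_eq_nil_iff.2 fun d hd => filter_eq_nil_iff.2 fun w hw => ?_
    rw [mem_range'_1] at hd
    rw [mem_allWords.1 hw]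
    have : ¬ d ∣ m + 2 := fun h => by
      rcases hn.eq_one_or_self_of_dvd d h with h | h <;> omega
    simp [this]
  have hlast : (allWords (m + 2)).filter
      (fun w => decide (IsLyndon w) && decide (w.length ∣ m + 2)) =
      (allWords (m + 2)).filter (fun w => decide (IsLyndon w)) :=
    filter_congr fun w hw => by simp [mem_allWords.1 hw]
  have hnil : ¬ IsLyndon [] := fun h => h.1 rfl
  rw [filter_flatMap, range_succ, flatMap_append, range_eq_range', range'_succ, range'_succ,
    flatMap_cons, flatMap_cons, hmid, flatMap_singleton, hlast,
    show allWords 0 = [[]] from rfl, show allWords (0 + 1) = [[false], [true]] from rfl]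
  simp [hnil, show IsLyndon [false] by decide, show IsLyndon [true] by decide]

theorem pairwise_lexLe_lyndonClasses {n : ℕ} (hn : 2 ≤ n) :
    Pairwise lexLe ([false] ::
      (((Ico 1 n).reverse.map fun k => insertionSort lexLe (lyndonClass n k)).flatten ++
        [[true]])) := by
  have hform : ∀ k, ∀ w ∈ insertionSort lexLe (lyndonClass n k),
      1 ≤ k ∧ ∃ r, w = replicate k false ++ true :: r :=
    fun k w hw => exists_eq_replicate_append_of_mem_lyndonClass hn ((mem_insertionSort _).1 hw)
  rw [pairwise_cons, pairwise_append, pairwise_flatten, pairwise_map, pairwise_reverse]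
  simp only [mem_append, mem_flatten, mem_map, mem_singleton]
  refine ⟨?_, ⟨⟨?_, ?_⟩, pairwise_singleton _ _, ?_⟩⟩
  · rintro w (⟨_, ⟨k, -, rfl⟩, hw⟩ | rfl)
    · obtain ⟨hk, r, rfl⟩ := hform k w hw
      exact .inl (singleton_false_lt_replicate_append hk r)
    · exact .inl (Lex.rel rfl)
  · rintro _ ⟨k, -, rfl⟩
    exact pairwise_insertionSort _ _
  · refine (Ico.pairwise_lt 1 n).imp fun hjk u hu v hv => ?_
    obtain ⟨-, r, rfl⟩ := hform _ u hu
    obtain ⟨-, r', rfl⟩ := hform _ v hv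
    exact .inl (replicate_false_append_true_lt hjk r r')
  · rintro w ⟨_, ⟨k, -, rfl⟩, hw⟩ _ rfl
    obtain ⟨hk, r, rfl⟩ := hform k w hw
    exact .inl (replicate_append_lt_singleton_true hk r)

theorem LWord_decomposition_general (n : ℕ) (hn : n.Prime) :
    LWord n = false :: (((List.Ico 1 n).reverse.map (ell n)).flatten ++ [true]) := by
  have hperm : (((range (n + 1)).flatMap allWords).filter
        (fun w => decide (IsLyndon w) && decide (w.length ∣ n))).Perm ([false] ::
      (((Ico 1 n).reverse.map fun k => insertionSort lexLe (lyndonClass n k)).flatten ++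
        [[true]])) := by
    rw [filter_isLyndon_length_dvd_prime hn]
    refine .cons _ (.trans (.cons _ ?_) (perm_append_singleton _ _).symm)
    exact (perm_filter_isLyndon_flatten_lyndonClass hn.two_le).trans
      (Perm.flatMap_left _ fun k _ => (perm_insertionSort _ _).symm)
  rw [LWord, ((perm_insertionSort _ _).trans hperm).eq_of_pairwise'
    (pairwise_insertionSort _ _) (pairwise_lexLe_lyndonClasses hn.two_le)]
  simp only [flatten_cons, flatten_append, flatten_flatten, map_map]
  rfl

/-- For `n` prime, `n ≥ 3`,
`L_n = 0 · ℓ_{n−1} · ℓ_{n−2} ⋯ ℓ_2 · ℓ_1 · 1`. -/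
theorem LWord_decomposition (n : ℕ) (hn : n.Prime) (hn3 : 3 ≤ n) :
    LWord n = false :: (((List.Ico 1 n).reverse.map (ell n)).flatten ++ [true]) :=
  LWord_decomposition_general n hn
end

section
/- There exist a constant c > 0 and an integer N such that for all integers n ≥ N, Σ_{k=⌈log₂ n⌉+1}^{n−2} (k/3 − 2) · α_{k+1}(n−k−2) ≥ c · 2^n · log n / n (in the right-hand side, log n denotes the natural logarithm). -/
/-! Only the term `k = ⌈log₂ n⌉ + 1` of the (nonnegative) sum is needed. Appending letters one at a
time shows that at most `m · 2^(m-K)` words of length `m` contain `0^K`: a new run can only appear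
when a `0` is appended to a word ending in `0^(K-1)`. Hence `α_K(m) ≥ 3/4 · 2^m` once `4m ≤ 2^K`,
which holds for `K = k + 1`, `m = n - k - 2` since `n ≤ 2^(k-1)`. The term is then at least
`k · 2^m / 8`, while `2^n ≤ 16 n · 2^m` and `log n ≤ k`. -/

theorem List.countP_or_le {α : Type*} (p q : α → Bool) (l : List α) :
    l.countP (fun a => p a || q a) ≤ l.countP p + l.countP q := by
  induction l with
  | nil => simp
  | cons a l ih => by_cases hp : p a <;> by_cases hq : q a <;> simp [hp, hq] <;> omega

theorem List.replicate_succ_suffix_append_singleton_iff {α : Type*} (a b : α) (j : ℕ)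
    (l : List α) : List.replicate (j + 1) a <:+ l ++ [b] ↔ b = a ∧ List.replicate j a <:+ l := by
  simpa [List.replicate_succ', List.suffix_concat_iff] using fun _ => eq_comm

theorem hasZeroRun_succ_append_singleton_iff (K : ℕ) (w : List Bool) (b : Bool) :
    hasZeroRun (K + 1) (w ++ [b]) ↔
      hasZeroRun (K + 1) w ∨ (b = false ∧ List.replicate K false <:+ w) := by
  rw [hasZeroRun, hasZeroRun, List.infix_concat_iff,
    List.replicate_succ_suffix_append_singleton_iff, or_comm]

theorem length_allWords (n : ℕ) : (allWords n).length = 2 ^ n := by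
  induction n with
  | zero => rfl
  | succ n ih => simp [allWords, List.length_flatMap, ih, pow_succ]

theorem countP_allWords_succ (p : List Bool → Bool) (m : ℕ) :
    (allWords (m + 1)).countP p =
      (allWords m).countP (fun w => p (w ++ [false])) +
        (allWords m).countP (fun w => p (w ++ [true])) := by
  rw [allWords]
  induction allWords m with
  | nil => rfl
  | cons w l ih =>
    simp only [List.flatMap_cons, List.countP_append, List.countP_cons, List.countP_nil, ih]
    omega

theorem two_pow_mul_countP_replicate_suffix_le (j m : ℕ) :
    2 ^ j * (allWords m).countP (fun w => List.replicate j false <:+ w) ≤ 2 ^ m := by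
  induction j generalizing m with
  | zero => simp [length_allWords]
  | succ j ih =>
    cases m with
    | zero => simp [allWords]
    | succ m =>
      simpa [countP_allWords_succ, List.replicate_succ_suffix_append_singleton_iff, pow_succ,
        mul_right_comm] using Nat.mul_le_mul_right 2 (ih m)

theorem two_pow_mul_countP_hasZeroRun_le (K m : ℕ) :
    2 ^ (K + 1) * (allWords m).countP (fun w => hasZeroRun (K + 1) w) ≤ m * 2 ^ m := by
  induction m with
  | zero => simp [allWords, hasZeroRun]
  | succ m ih =>
    have hstep := List.countP_or_le (fun w => decide (hasZeroRun (K + 1) w))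
      (fun w => decide (List.replicate K false <:+ w)) (allWords m)
    have hsuf := two_pow_mul_countP_replicate_suffix_le K m
    simp only [countP_allWords_succ, hasZeroRun_succ_append_singleton_iff, true_and, Bool.decide_or,
      Bool.true_eq_false, false_and, or_false]
    rw [pow_succ] at ih
    rw [pow_succ, pow_succ]
    nlinarith [Nat.mul_le_mul_left (2 ^ K * 2) hstep]

theorem countP_hasZeroRun_add_alpha (K m : ℕ) :
    (allWords m).countP (fun w => hasZeroRun K w) + alpha K m = 2 ^ m := by
  rw [alpha, ← List.countP_eq_length_filter, ← length_allWords m,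
    List.length_eq_countP_add_countP (fun w => decide (hasZeroRun K w))]
  simp

theorem three_mul_two_pow_le_four_mul_alpha {K m : ℕ} (h : 4 * m ≤ 2 ^ (K + 1)) :
    3 * 2 ^ m ≤ 4 * alpha (K + 1) m := by
  have hsplit := countP_hasZeroRun_add_alpha (K + 1) m
  have hbad : 4 * (allWords m).countP (fun w => hasZeroRun (K + 1) w) ≤ 2 ^ m := by
    refine Nat.le_of_mul_le_mul_left ?_ (Nat.two_pow_pos (K + 1))
    calc 2 ^ (K + 1) * (4 * (allWords m).countP (fun w => hasZeroRun (K + 1) w))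
        = 4 * (2 ^ (K + 1) * (allWords m).countP (fun w => hasZeroRun (K + 1) w)) := by ring
      _ ≤ 4 * (m * 2 ^ m) := Nat.mul_le_mul_left 4 (two_pow_mul_countP_hasZeroRun_le K m)
      _ ≤ 2 ^ (K + 1) * 2 ^ m := by rw [← mul_assoc]; gcongr
  omega

theorem mul_two_pow_div_eight_le_mul_alpha {k m : ℕ} (hk : 12 ≤ k) (hm : 4 * m ≤ 2 ^ (k + 1)) :
    (k : ℝ) * 2 ^ m / 8 ≤ ((k : ℝ) / 3 - 2) * alpha (k + 1) m := by
  have hα : (3 : ℝ) * 2 ^ m ≤ 4 * alpha (k + 1) m := by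
    exact_mod_cast three_mul_two_pow_le_four_mul_alpha hm
  have hk' : (12 : ℝ) ≤ k := by exact_mod_cast hk
  nlinarith [pow_pos (two_pos (α := ℝ)) m]

theorem log_le_clog_two (n : ℕ) : Real.log n ≤ Nat.clog 2 n := by
  rcases n.eq_zero_or_pos with rfl | hn
  · simp
  calc Real.log n ≤ Real.log ((2 : ℝ) ^ Nat.clog 2 n) :=
        Real.log_le_log (by exact_mod_cast hn) (by exact_mod_cast Nat.le_pow_clog one_lt_two n)
    _ = Nat.clog 2 n * Real.log 2 := Real.log_pow _ _
    _ ≤ Nat.clog 2 n := mul_le_of_le_one_right (Nat.cast_nonneg _)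
        (Real.log_two_lt_d9.le.trans (by norm_num))

theorem two_pow_clog_two_lt_two_mul {n : ℕ} (hn : 1 < n) : 2 ^ Nat.clog 2 n < 2 * n := by
  have h := Nat.pow_pred_clog_lt_self one_lt_two hn
  rw [← Nat.succ_pred_eq_of_pos (Nat.clog_pos one_lt_two hn), pow_succ]
  omega

theorem clog_two_add_three_le {n : ℕ} (hn : 8 < n) : Nat.clog 2 n + 3 ≤ n := by
  have hc : 3 < Nat.clog 2 n := (Nat.lt_clog_iff_pow_lt one_lt_two).2 hn
  have h₀ := two_pow_clog_two_lt_two_mul (by omega : 1 < n)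
  have h₁ : Nat.clog 2 n - 3 < 2 ^ (Nat.clog 2 n - 3) := Nat.lt_two_pow_self
  have h₂ : 2 ^ Nat.clog 2 n = 2 ^ (Nat.clog 2 n - 3) * 2 ^ 3 := by
    rw [← pow_add, Nat.sub_add_cancel hc.le]
  omega

theorem two_pow_le_sixteen_mul_two_pow_sub {n k : ℕ} (hk : 2 ^ k < 4 * n) :
    2 ^ n ≤ 16 * n * 2 ^ (n - k - 2) :=
  calc 2 ^ n ≤ 2 ^ (k + 2 + (n - k - 2)) := Nat.pow_le_pow_right two_pos (by omega)
    _ = 4 * 2 ^ k * 2 ^ (n - k - 2) := by rw [pow_add, pow_add]; ring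
    _ ≤ 16 * n * 2 ^ (n - k - 2) := Nat.mul_le_mul_right _ (by omega)

theorem mul_alpha_le_sum_Icc {a b j : ℕ} (n : ℕ) (ha : 6 ≤ a) (hj : j ∈ Finset.Icc a b) :
    ((j : ℝ) / 3 - 2) * alpha (j + 1) (n - j - 2) ≤
      ∑ k ∈ Finset.Icc a b, ((k : ℝ) / 3 - 2) * alpha (k + 1) (n - k - 2) := by
  refine Finset.single_le_sum (f := fun k : ℕ => ((k : ℝ) / 3 - 2) * alpha (k + 1) (n - k - 2))
    (fun k hk => ?_) hj
  have : (6 : ℝ) ≤ k := by exact_mod_cast ha.trans (Finset.mem_Icc.1 hk).1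
  have : (0 : ℝ) ≤ (k : ℝ) / 3 - 2 := by linarith
  positivity

/-- `Σ_{k=⌈log₂ n⌉+1}^{n−2} (k/3 − 2)·α_{k+1}(n−k−2) = Ω(2^n log n / n)`. -/
theorem sum_alpha_lower :
    ∃ c > (0 : ℝ), ∃ N : ℕ, ∀ n : ℕ, N ≤ n →
      c * 2 ^ n * Real.log n / n ≤
        ∑ k ∈ Finset.Icc (Nat.clog 2 n + 1) (n - 2),
          ((k : ℝ) / 3 - 2) * (alpha (k + 1) (n - k - 2) : ℝ) := by
  refine ⟨1 / 128, by norm_num, 2 ^ 11 + 1, fun n hn => ?_⟩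
  have hc : 11 < Nat.clog 2 n := (Nat.lt_clog_iff_pow_lt one_lt_two).2 hn
  have hcn : Nat.clog 2 n + 3 ≤ n := clog_two_add_three_le (by omega)
  have hn_le : n ≤ 2 ^ Nat.clog 2 n := Nat.le_pow_clog one_lt_two n
  have hclog_lt : 2 ^ Nat.clog 2 n < 2 * n := two_pow_clog_two_lt_two_mul (by omega)
  set k := Nat.clog 2 n + 1
  have hpow : (2 : ℝ) ^ n ≤ 16 * n * 2 ^ (n - k - 2) := by
    exact_mod_cast two_pow_le_sixteen_mul_two_pow_sub (by rw [pow_succ]; omega)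
  have hlog : Real.log n ≤ k := by push_cast [k]; linarith [log_le_clog_two n]
  calc 1 / 128 * 2 ^ n * Real.log n / n ≤ 1 / 128 * (16 * n * 2 ^ (n - k - 2)) * k / n := by
        gcongr
    _ = k * 2 ^ (n - k - 2) / 8 := by field_simp; ring
    _ ≤ ((k : ℝ) / 3 - 2) * alpha (k + 1) (n - k - 2) :=
        mul_two_pow_div_eight_le_mul_alpha (by omega) (by rw [pow_succ, pow_succ]; omega)
    _ ≤ _ := mul_alpha_le_sum_Icc n (by omega) (Finset.mem_Icc.2 ⟨le_rfl, by omega⟩)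
end
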